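/- Let Ω ⊂ ℝ² be a bounded smooth domain, (ψ, A) a smooth solution of the Ginzburg–Landau system with curl A = 1 on ∂Ω and the second equation −∇⊥ curl A = (κH)⁻¹ Im(ψ̄ (∇ − iκHA)ψ) in Ω. Assume ‖(∇ − iκHA)ψ‖_{L^∞(Ω)} ≤ C₁κ and, for δ ∈ (0,1), that |ψ(x)| ≤ M for all x with dist(x, ∂Ω) ≥ κ^{−1+δ}, and |ψ| ≤ 1 everywhere. Then there is a constant C (depending on C₁, Ω) such that ‖curl A − 1‖_{L^∞(Ω)} ≤ C H^{−1} ( κ^{−1+δ} + M ). -/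

import Mathlib

open MeasureTheory

/-- First component of the magnetic gradient `(∇ - i a A)ψ`. -/
noncomputable def mg1 (a : ℝ) (A : ℝ × ℝ → ℝ × ℝ) (ψ : ℝ × ℝ → ℂ) (x : ℝ × ℝ) : ℂ :=
  fderiv ℝ ψ x (1, 0) - Complex.I * (a : ℂ) * ((A x).1 : ℂ) * ψ x

/-- Second component of the magnetic gradient `(∇ - i a A)ψ`. -/
noncomputable def mg2 (a : ℝ) (A : ℝ × ℝ → ℝ × ℝ) (ψ : ℝ × ℝ → ℂ) (x : ℝ × ℝ) : ℂ :=
  fderiv ℝ ψ x (0, 1) - Complex.I * (a : ℂ) * ((A x).2 : ℂ) * ψ x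

/-- `curl A = ∂₁A₂ - ∂₂A₁`. -/
noncomputable def curlA (A : ℝ × ℝ → ℝ × ℝ) (x : ℝ × ℝ) : ℝ :=
  fderiv ℝ (fun y => (A y).2) x (1, 0) - fderiv ℝ (fun y => (A y).1) x (0, 1)

/-! Join `x ∈ Ω` to a nearest boundary point `p` by a segment of length `d ≤ diam Ω`. The
second Ginzburg–Landau equation and the bound on the magnetic gradient give
`|∇ curl A| ≤ 2 C₁ H⁻¹ |ψ|`. Since `p` is nearest, the point at parameter `t` of the segment lies
at distance at least `(1 - t) d` from `∂Ω`, so all of it but a final piece of length at most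
`κ^{δ-1}` lies where `|ψ| ≤ M`, while `|ψ| ≤ 1` on that final piece. The mean value inequality on
the two pieces, with `curl A p = 1`, gives `|curl A x - 1| ≤ 2 C₁ H⁻¹ (κ^{δ-1} + M diam Ω)`. -/

open Set Metric Bornology AffineMap

theorem ContinuousLinearMap.opNorm_le_norm_apply_one_zero_add {𝕜 G : Type*}
    [NontriviallyNormedField 𝕜] [NormedAddCommGroup G] [NormedSpace 𝕜 G] (L : 𝕜 × 𝕜 →L[𝕜] G) :
    ‖L‖ ≤ ‖L (1, 0)‖ + ‖L (0, 1)‖ := by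
  refine L.opNorm_le_bound (by positivity) fun v => ?_
  have hv : v = v.1 • ((1 : 𝕜), (0 : 𝕜)) + v.2 • ((0 : 𝕜), (1 : 𝕜)) := by simp
  calc ‖L v‖ = ‖v.1 • L (1, 0) + v.2 • L (0, 1)‖ := by
        rw [← L.map_smul, ← L.map_smul, ← map_add, ← hv]
    _ ≤ ‖v.1‖ * ‖L (1, 0)‖ + ‖v.2‖ * ‖L (0, 1)‖ := by
        rw [← norm_smul, ← norm_smul]; exact norm_add_le _ _
    _ ≤ ‖v‖ * ‖L (1, 0)‖ + ‖v‖ * ‖L (0, 1)‖ := by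
        gcongr; exacts [_root_.norm_fst_le v, _root_.norm_snd_le v]
    _ = (‖L (1, 0)‖ + ‖L (0, 1)‖) * ‖v‖ := by ring

theorem Complex.abs_im_conj_mul_le (z w : ℂ) : |(starRingEnd ℂ z * w).im| ≤ ‖z‖ * ‖w‖ := by
  simpa [norm_mul] using Complex.abs_im_le_norm (starRingEnd ℂ z * w)

theorem norm_image_sub_le_of_norm_deriv_right_le_of_split {E : Type*} [NormedAddCommGroup E]
    [NormedSpace ℝ E] {f f' : ℝ → E} {a b c A B : ℝ} (hab : a ≤ b) (hbc : b ≤ c)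
    (hf : ContinuousOn f (Icc a c)) (hf' : ∀ t ∈ Ico a c, HasDerivWithinAt f (f' t) (Ici t) t)
    (hA : ∀ t ∈ Ico a b, ‖f' t‖ ≤ A) (hB : ∀ t ∈ Ico b c, ‖f' t‖ ≤ B) :
    ‖f c - f a‖ ≤ A * (b - a) + B * (c - b) := by
  have hab' := norm_image_sub_le_of_norm_deriv_right_le_segment
    (hf.mono (Icc_subset_Icc_right hbc)) (fun t ht => hf' t ⟨ht.1, ht.2.trans_le hbc⟩) hA b
    ⟨hab, le_rfl⟩
  have hbc' := norm_image_sub_le_of_norm_deriv_right_le_segment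
    (hf.mono (Icc_subset_Icc_left hab)) (fun t ht => hf' t ⟨hab.trans ht.1, ht.2⟩) hB c
    ⟨hbc, le_rfl⟩
  calc ‖f c - f a‖ = ‖(f b - f a) + (f c - f b)‖ := by abel_nf
    _ ≤ A * (b - a) + B * (c - b) := (norm_add_le _ _).trans (add_le_add hab' hbc')

section Geometry

variable {E : Type*} [NormedAddCommGroup E] [NormedSpace ℝ E] {s : Set E} {x p : E}

theorem IsOpen.ball_infDist_frontier_subset (hs : IsOpen s) (hx : x ∈ s) :
    ball x (infDist x (frontier s)) ⊆ s := by
  rcases (infDist_nonneg (x := x) (s := frontier s)).eq_or_lt with h | h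
  · simp [← h]
  refine (convex_ball x _).isPreconnected.subset_of_closure_inter_subset hs
    ⟨x, mem_ball_self h, hx⟩ fun y ⟨hyc, hyb⟩ => ?_
  rw [closure_eq_self_union_frontier] at hyc
  exact hyc.resolve_right (disjoint_ball_infDist.notMem_of_mem_left hyb)

theorem IsOpen.lineMap_mem_of_infDist_eq_dist (hs : IsOpen s) (hx : x ∈ s) (hp : p ∈ frontier s)
    (hxp : infDist x (frontier s) = dist x p) {t : ℝ} (ht : t ∈ Ico 0 1) :
    lineMap x p t ∈ s := by
  have hpos : 0 < dist x p := dist_pos.2 fun h => hs.frontier_eq ▸ hp |>.2 (h ▸ hx)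
  refine hs.ball_infDist_frontier_subset hx ?_
  rw [mem_ball, dist_lineMap_left, hxp, Real.norm_eq_abs, abs_of_nonneg ht.1]
  exact mul_lt_of_lt_one_left hpos ht.2

theorem one_sub_mul_infDist_le_infDist_lineMap {t : ℝ} (ht : 0 ≤ t)
    (hxp : infDist x s = dist x p) :
    (1 - t) * infDist x s ≤ infDist (lineMap x p t) s := by
  have := infDist_le_infDist_add_dist (x := x) (y := lineMap x p t) (s := s)
  rw [dist_comm, dist_lineMap_left, Real.norm_eq_abs, abs_of_nonneg ht, ← hxp] at this
  linarith

theorem Bornology.IsBounded.exists_mem_frontier_infDist_eq_dist [ProperSpace E] [Nontrivial E]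
    (hsb : IsBounded s) (hx : x ∈ s) : ∃ p ∈ frontier s, infDist x (frontier s) = dist x p := by
  have hne : (frontier s).Nonempty :=
    nonempty_frontier_iff.2 ⟨⟨x, hx⟩, fun h => NormedSpace.unbounded_univ ℝ E (h ▸ hsb)⟩
  exact isClosed_frontier.exists_infDist_eq_dist hne x

end Geometry

theorem norm_image_sub_le_of_norm_deriv_right_le_near_one {G : Type*} [NormedAddCommGroup G]
    [NormedSpace ℝ G] {f f' : ℝ → G} {K L ε : ℝ} (hε : 0 ≤ ε) (hL0 : 0 ≤ L)
    (hf : ContinuousOn f (Icc 0 1)) (hf' : ∀ t ∈ Ico 0 1, HasDerivWithinAt f (f' t) (Ici t) t)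
    (hK : ∀ t ∈ Ico (0 : ℝ) 1, ‖f' t‖ ≤ K) (hL : ∀ t ∈ Ico 0 1, ε ≤ 1 - t → ‖f' t‖ ≤ L) :
    ‖f 1 - f 0‖ ≤ K * ε + L := by
  set σ := max 0 (1 - ε)
  have hσ1 : σ ≤ 1 := max_le zero_le_one (by linarith)
  have hK0 : 0 ≤ K := (norm_nonneg _).trans (hK 0 ⟨le_rfl, zero_lt_one⟩)
  have hsplit := norm_image_sub_le_of_norm_deriv_right_le_of_split (le_max_left _ _) hσ1 hf hf'
    (fun t ht => hL t ⟨ht.1, ht.2.trans_le hσ1⟩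
      (by linarith [(lt_max_iff.1 ht.2).resolve_left ht.1.not_gt]))
    (fun t ht => hK t ⟨(le_max_left _ _).trans ht.1, ht.2⟩)
  calc ‖f 1 - f 0‖ ≤ L * (σ - 0) + K * (1 - σ) := hsplit
    _ ≤ L * 1 + K * ε := by
        gcongr
        · linarith
        · linarith [le_max_right 0 (1 - ε)]
    _ = K * ε + L := by ring

theorem norm_sub_le_of_eq_on_frontier_of_norm_fderiv_le {E G : Type*} [NormedAddCommGroup E]
    [NormedSpace ℝ E] [ProperSpace E] [Nontrivial E] [NormedAddCommGroup G] [NormedSpace ℝ G]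
    {s : Set E} (hs : IsOpen s) (hsb : IsBounded s) {F : E → G} {c : G} {K L r : ℝ}
    (hFc : ContinuousOn F (closure s)) (hFd : DifferentiableOn ℝ F s)
    (hFfr : ∀ y ∈ frontier s, F y = c) (hK : ∀ y ∈ s, ‖fderiv ℝ F y‖ ≤ K)
    (hL : ∀ y ∈ s, r ≤ infDist y (frontier s) → ‖fderiv ℝ F y‖ ≤ L) (hr : 0 ≤ r) (hL0 : 0 ≤ L)
    {x : E} (hx : x ∈ s) : ‖F x - c‖ ≤ K * r + L * diam s := by
  obtain ⟨p, hp, hxp⟩ := hsb.exists_mem_frontier_infDist_eq_dist hx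
  set d := dist x p
  have hd : 0 < d := dist_pos.2 fun h => hs.frontier_eq ▸ hp |>.2 (h ▸ hx)
  have hdiam : d ≤ diam s := by
    simpa using dist_le_diam_of_mem hsb.closure (subset_closure hx) (frontier_subset_closure hp)
  have hmem : ∀ t ∈ Ico (0 : ℝ) 1, lineMap x p t ∈ s := fun t ht =>
    hs.lineMap_mem_of_infDist_eq_dist hx hp hxp ht
  have hcont : ContinuousOn (F ∘ (lineMap x p : ℝ → E)) (Icc 0 1) := by
    refine hFc.comp (lineMap_continuous (R := ℝ)).continuousOn fun t ht => ?_
    rcases ht.2.lt_or_eq with ht1 | rfl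
    · exact subset_closure (hmem t ⟨ht.1, ht1⟩)
    · simpa using frontier_subset_closure hp
  have hderiv : ∀ t ∈ Ico (0 : ℝ) 1, HasDerivWithinAt (F ∘ lineMap x p)
      (fderiv ℝ F (lineMap x p t) (p - x)) (Ici t) t := fun t ht =>
    (((hFd _ (hmem t ht)).differentiableAt (hs.mem_nhds (hmem t ht))).hasFDerivAt.comp_hasDerivAt
      t hasDerivAt_lineMap).hasDerivWithinAt
  have hbound : ∀ t ∈ Ico (0 : ℝ) 1, ∀ C, ‖fderiv ℝ F (lineMap x p t)‖ ≤ C →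
      ‖fderiv ℝ F (lineMap x p t) (p - x)‖ ≤ C * d := fun t _ C hC =>
    ((ContinuousLinearMap.le_opNorm _ _).trans_eq (by rw [← dist_eq_norm'])).trans
      (mul_le_mul_of_nonneg_right hC hd.le)
  have hfar : ∀ t ∈ Ico (0 : ℝ) 1, r / d ≤ 1 - t →
      ‖fderiv ℝ F (lineMap x p t) (p - x)‖ ≤ L * d := fun t ht hrt =>
    hbound t ht L <| hL _ (hmem t ht) <| (div_le_iff₀ hd).1 hrt |>.trans <| by
      rw [← hxp]; exact one_sub_mul_infDist_le_infDist_lineMap ht.1 hxp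
  have hsegment := norm_image_sub_le_of_norm_deriv_right_le_near_one (div_nonneg hr hd.le)
    (mul_nonneg hL0 hd.le) hcont hderiv (fun t ht => hbound t ht K (hK _ (hmem t ht))) hfar
  simp only [Function.comp_apply, lineMap_apply_zero, lineMap_apply_one, hFfr p hp] at hsegment
  calc ‖F x - c‖ = ‖c - F x‖ := norm_sub_rev _ _
    _ ≤ K * d * (r / d) + L * d := hsegment
    _ ≤ K * r + L * diam s := by
        rw [mul_assoc, mul_div_cancel₀ r hd.ne']
        gcongr

theorem contDiff_curlA {n : WithTop ℕ∞} {A : ℝ × ℝ → ℝ × ℝ} (hA : ContDiff ℝ (n + 1) A) :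
    ContDiff ℝ n (curlA A) :=
  ((hA.snd.fderiv_right le_rfl).clm_apply contDiff_const).sub
    ((hA.fst.fderiv_right le_rfl).clm_apply contDiff_const)

theorem norm_fderiv_curlA_le {κ H C₁ : ℝ} {ψ : ℝ × ℝ → ℂ} {A : ℝ × ℝ → ℝ × ℝ} {y : ℝ × ℝ}
    (hκ : 0 < κ) (hH : 0 < H)
    (h₁ : fderiv ℝ (curlA A) y (0, 1) =
      (κ * H)⁻¹ * ((starRingEnd ℂ) (ψ y) * mg1 (κ * H) A ψ y).im)
    (h₂ : -(fderiv ℝ (curlA A) y (1, 0)) =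
      (κ * H)⁻¹ * ((starRingEnd ℂ) (ψ y) * mg2 (κ * H) A ψ y).im)
    (hgrad : Real.sqrt (‖mg1 (κ * H) A ψ y‖ ^ 2 + ‖mg2 (κ * H) A ψ y‖ ^ 2) ≤ C₁ * κ) :
    ‖fderiv ℝ (curlA A) y‖ ≤ 2 * C₁ * H⁻¹ * ‖ψ y‖ := by
  have hcurrent : ∀ w : ℂ, ‖w‖ ≤ C₁ * κ →
      |(κ * H)⁻¹ * ((starRingEnd ℂ) (ψ y) * w).im| ≤ C₁ * H⁻¹ * ‖ψ y‖ := by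
    intro w hw
    rw [abs_mul, abs_of_pos (by positivity)]
    calc (κ * H)⁻¹ * |((starRingEnd ℂ) (ψ y) * w).im| ≤ (κ * H)⁻¹ * (‖ψ y‖ * (C₁ * κ)) := by
          gcongr; exact (Complex.abs_im_conj_mul_le _ _).trans (by gcongr)
      _ = C₁ * H⁻¹ * ‖ψ y‖ := by field_simp
  have hmg₁ : ‖mg1 (κ * H) A ψ y‖ ≤ C₁ * κ :=
    (Real.le_sqrt_of_sq_le (le_add_of_nonneg_right (sq_nonneg _))).trans hgrad
  have hmg₂ : ‖mg2 (κ * H) A ψ y‖ ≤ C₁ * κ :=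
    (Real.le_sqrt_of_sq_le (le_add_of_nonneg_left (sq_nonneg _))).trans hgrad
  calc ‖fderiv ℝ (curlA A) y‖
      ≤ ‖fderiv ℝ (curlA A) y (1, 0)‖ + ‖fderiv ℝ (curlA A) y (0, 1)‖ :=
        ContinuousLinearMap.opNorm_le_norm_apply_one_zero_add _
    _ ≤ C₁ * H⁻¹ * ‖ψ y‖ + C₁ * H⁻¹ * ‖ψ y‖ := by
        rw [Real.norm_eq_abs, Real.norm_eq_abs, ← abs_neg, h₁, h₂]
        exact add_le_add (hcurrent _ hmg₂) (hcurrent _ hmg₁)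
    _ = 2 * C₁ * H⁻¹ * ‖ψ y‖ := by ring

theorem stmt9_general (Ω : Set (ℝ × ℝ)) (hΩo : IsOpen Ω) (hΩb : Bornology.IsBounded Ω)
    (δ : ℝ) (C₁ : ℝ) (hC₁ : 0 < C₁) :
    ∃ C > 0, ∀ (κ H : ℝ) (ψ : ℝ × ℝ → ℂ) (A : ℝ × ℝ → ℝ × ℝ),
      0 < κ → κ / 2 ≤ H →
      ContDiff ℝ 2 ψ → ContDiff ℝ 2 A →
      -- `curl A = 1` on `∂Ω`
      (∀ x ∈ frontier Ω, curlA A x = 1) →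
      -- second Ginzburg–Landau equation `-∇⊥ curl A = (κH)⁻¹ Im(ψ̄(∇ - iκHA)ψ)` in `Ω`
      (∀ x ∈ Ω, fderiv ℝ (curlA A) x (0, 1) =
        (κ * H)⁻¹ * ((starRingEnd ℂ) (ψ x) * mg1 (κ * H) A ψ x).im) →
      (∀ x ∈ Ω, -(fderiv ℝ (curlA A) x (1, 0)) =
        (κ * H)⁻¹ * ((starRingEnd ℂ) (ψ x) * mg2 (κ * H) A ψ x).im) →
      -- a priori bound on the magnetic gradient
      (∀ x ∈ Ω, Real.sqrt (‖mg1 (κ * H) A ψ x‖ ^ 2 + ‖mg2 (κ * H) A ψ x‖ ^ 2) ≤ C₁ * κ) →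
      ∀ M : ℝ, 0 ≤ M →
        -- `|ψ| ≤ M` at distance `≥ κ^{-1+δ}` from the boundary, `|ψ| ≤ 1` everywhere
        (∀ x ∈ Ω, κ ^ (δ - 1) ≤ Metric.infDist x (frontier Ω) → ‖ψ x‖ ≤ M) →
        (∀ x ∈ Ω, ‖ψ x‖ ≤ 1) →
        ∀ x ∈ Ω, |curlA A x - 1| ≤ C * H⁻¹ * (κ ^ (δ - 1) + M) := by
  refine ⟨2 * C₁ * (diam Ω + 1), by positivity, ?_⟩
  intro κ H ψ A hκ hκH _ hA hbc heq₁ heq₂ hgrad M hM hψM hψ₁ x hx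
  have hH : 0 < H := by linarith
  have hcurl : ContDiff ℝ 1 (curlA A) := contDiff_curlA hA
  have hbound : ∀ y ∈ Ω, ‖fderiv ℝ (curlA A) y‖ ≤ 2 * C₁ * H⁻¹ * ‖ψ y‖ := fun y hy =>
    norm_fderiv_curlA_le hκ hH (heq₁ y hy) (heq₂ y hy) (hgrad y hy)
  have hκr : 0 < κ ^ (δ - 1) := Real.rpow_pos_of_pos hκ _
  have hest := norm_sub_le_of_eq_on_frontier_of_norm_fderiv_le (K := 2 * C₁ * H⁻¹)
    (L := 2 * C₁ * H⁻¹ * M) hΩo hΩb hcurl.continuous.continuousOn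
    (hcurl.differentiable one_ne_zero).differentiableOn hbc
    (fun y hy => (hbound y hy).trans (mul_le_of_le_one_right (by positivity) (hψ₁ y hy)))
    (fun y hy hr => (hbound y hy).trans (by gcongr; exact hψM y hy hr)) hκr.le
    (by positivity) hx
  rw [Real.norm_eq_abs] at hest
  refine hest.trans (sub_nonneg.1 ?_)
  calc (0 : ℝ) ≤ 2 * C₁ * H⁻¹ * (diam Ω * κ ^ (δ - 1) + M) := by positivity
    _ = _ := by ring

/-- estimate `‖curl A - 1‖_∞ ≤ C H⁻¹ (κ^{-1+δ} + M)` for solutions of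
the second Ginzburg–Landau equation with `curl A = 1` on `∂Ω`. -/
theorem stmt9 (Ω : Set (ℝ × ℝ)) (hΩo : IsOpen Ω) (hΩb : Bornology.IsBounded Ω)
    (δ : ℝ) (hδ : δ ∈ Set.Ioo (0 : ℝ) 1) (C₁ : ℝ) (hC₁ : 0 < C₁) :
    ∃ C > 0, ∀ (κ H : ℝ) (ψ : ℝ × ℝ → ℂ) (A : ℝ × ℝ → ℝ × ℝ),
      0 < κ → κ / 2 ≤ H →
      ContDiff ℝ 2 ψ → ContDiff ℝ 2 A →
      -- `curl A = 1` on `∂Ω`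
      (∀ x ∈ frontier Ω, curlA A x = 1) →
      -- second Ginzburg–Landau equation `-∇⊥ curl A = (κH)⁻¹ Im(ψ̄(∇ - iκHA)ψ)` in `Ω`
      (∀ x ∈ Ω, fderiv ℝ (curlA A) x (0, 1) =
        (κ * H)⁻¹ * ((starRingEnd ℂ) (ψ x) * mg1 (κ * H) A ψ x).im) →
      (∀ x ∈ Ω, -(fderiv ℝ (curlA A) x (1, 0)) =
        (κ * H)⁻¹ * ((starRingEnd ℂ) (ψ x) * mg2 (κ * H) A ψ x).im) →
      -- a priori bound on the magnetic gradient
      (∀ x ∈ Ω, Real.sqrt (‖mg1 (κ * H) A ψ x‖ ^ 2 + ‖mg2 (κ * H) A ψ x‖ ^ 2) ≤ C₁ * κ) →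
      ∀ M : ℝ, 0 ≤ M →
        -- `|ψ| ≤ M` at distance `≥ κ^{-1+δ}` from the boundary, `|ψ| ≤ 1` everywhere
        (∀ x ∈ Ω, κ ^ (δ - 1) ≤ Metric.infDist x (frontier Ω) → ‖ψ x‖ ≤ M) →
        (∀ x ∈ Ω, ‖ψ x‖ ≤ 1) →
        ∀ x ∈ Ω, |curlA A x - 1| ≤ C * H⁻¹ * (κ ^ (δ - 1) + M) :=
  stmt9_general Ω hΩo hΩb δ C₁ hC₁
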